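/- Let k ≥ 3, let σ ∈ {−1,+1}^k, let ζ ∈ ℂ satisfy ζ^{k−2} = σ_1⋯σ_k, and let z ∈ ℂ^k have coordinates z_i = σ_i · ζ. With g(x) = −(x_1²+⋯+x_k²)/2 + x_1⋯x_k, the Hessian matrix (Hess g)(z) (which has diagonal entries −1 and (i,j)-entry ∏_{l≠i,j} z_l for i ≠ j) satisfies det((Hess g)(z)) = (−1)^{k−1} · 2^{k−1} · (k−2). -/

import Mathlib

/-!
At `z = σζ` every off-diagonal Hessian entry `∏_{l ≠ i,j} z_l` equals
`σᵢσⱼ (∏ σ) ζ^(k-2) = σᵢσⱼ (∏ σ)² = σᵢσⱼ`, while the diagonal entries are `-1 = -2 + σᵢ²`.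
Hence `(Hess g)(z) = -2 I + σ σᵀ`, and the matrix determinant lemma together with `σ ⬝ σ = k`
gives `det = (-2)^k (1 - k/2) = (-2)^(k-1) (k - 2)`.
-/

open MvPolynomial

/-- The Hessian matrix at `z ∈ ℂ^k` of `g(x) = -(x₁² + ⋯ + x_k²)/2 + x₁⋯x_k`. -/
noncomputable def hessGProd (k : ℕ) (z : Fin k → ℂ) : Matrix (Fin k) (Fin k) ℂ :=
  Matrix.of fun i j =>
    MvPolynomial.eval z (MvPolynomial.pderiv i (MvPolynomial.pderiv j
      (-(MvPolynomial.C (1 / 2 : ℂ) * ∑ l, MvPolynomial.X l ^ 2) +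
        ∏ l, MvPolynomial.X l)))

namespace MvPolynomial

variable {R σ : Type*} [CommSemiring R]

theorem pderiv_prod_X_of_notMem {s : Finset σ} {i : σ} (hi : i ∉ s) :
    pderiv i (∏ l ∈ s, X l : MvPolynomial σ R) = 0 :=
  Finset.prod_induction _ (fun p => pderiv i p = 0)
    (fun p q hp hq => by rw [pderiv_mul, hp, hq, zero_mul, mul_zero, add_zero]) pderiv_one
    fun l hl => pderiv_X_of_ne (ne_of_mem_of_not_mem hl hi)

theorem pderiv_prod_X [DecidableEq σ] (s : Finset σ) (i : σ) :
    pderiv i (∏ l ∈ s, X l : MvPolynomial σ R) =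
      if i ∈ s then ∏ l ∈ s.erase i, X l else 0 := by
  split_ifs with hi
  · rw [← Finset.mul_prod_erase s _ hi, pderiv_mul, pderiv_X_self,
      pderiv_prod_X_of_notMem (s.notMem_erase i), mul_zero, one_mul, add_zero]
  · exact pderiv_prod_X_of_notMem hi

theorem pderiv_sum_X_sq [Fintype σ] [DecidableEq σ] (j : σ) :
    pderiv j (∑ l, X l ^ 2 : MvPolynomial σ R) = 2 * X j := by
  simp [pderiv_X, Pi.single_apply]

end MvPolynomial

theorem pderiv_neg_half_sum_X_sq_add_prod_X {k : ℕ} (j : Fin k) :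
    pderiv j (-(C (1 / 2 : ℂ) * ∑ l, X l ^ 2) + ∏ l, X l : MvPolynomial (Fin k) ℂ) =
      -X j + ∏ l ∈ Finset.univ.erase j, X l := by
  rw [map_add, map_neg, pderiv_C_mul, pderiv_sum_X_sq, pderiv_prod_X, if_pos (Finset.mem_univ j),
    ← mul_assoc, ← map_ofNat C 2, ← C_mul, one_div, inv_mul_cancel₀ two_ne_zero, C_1, one_mul]

theorem hessGProd_apply {k : ℕ} (z : Fin k → ℂ) (i j : Fin k) :
    hessGProd k z i j =
      if i = j then -1 else ∏ l ∈ (Finset.univ.erase j).erase i, z l := by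
  rw [hessGProd, Matrix.of_apply, pderiv_neg_half_sum_X_sq_add_prod_X]
  by_cases hij : i = j
  · subst hij
    simp [pderiv_prod_X]
  · simp [pderiv_prod_X, pderiv_X_of_ne (Ne.symm hij), hij]

theorem Finset.prod_erase_erase_of_mul_self_eq_one {ι M : Type*} [CommMonoid M] [Fintype ι]
    [DecidableEq ι] {s : ι → M} (hs : ∀ i, s i * s i = 1) {i j : ι} (hij : i ≠ j) :
    ∏ l ∈ (Finset.univ.erase j).erase i, s l = s i * s j * ∏ l, s l := by
  rw [← Finset.mul_prod_erase _ s (Finset.mem_univ j),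
    ← Finset.mul_prod_erase _ s (Finset.mem_erase.mpr ⟨hij, Finset.mem_univ i⟩)]
  calc _ = (s i * s i) * (s j * s j) * ∏ l ∈ (Finset.univ.erase j).erase i, s l := by
        rw [hs, hs, one_mul, one_mul]
    _ = _ := by ac_rfl

theorem Matrix.det_smul_one_add_vecMulVec {n K : Type*} [Fintype n] [DecidableEq n] [Field K]
    {c : K} (hc : c ≠ 0) (u v : n → K) :
    (c • 1 + vecMulVec u v).det = c ^ Fintype.card n * (1 + c⁻¹ * (v ⬝ᵥ u)) := by
  have : c • 1 + vecMulVec u v = c • (1 + replicateCol Unit (c⁻¹ • u) * replicateRow Unit v) := by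
    rw [← vecMulVec_eq, smul_add, smul_vecMulVec, smul_smul, mul_inv_cancel₀ hc, one_smul]
  rw [this, det_smul, det_one_add_replicateCol_mul_replicateRow, dotProduct_smul, smul_eq_mul]

theorem hessGProd_eq_neg_two_smul_one_add_vecMulVec {k : ℕ} {s : Fin k → ℂ} (hs : ∀ i, s i * s i = 1) {ζ : ℂ}
    (hζ : ζ ^ (k - 2) = ∏ i, s i) {z : Fin k → ℂ} (hz : ∀ i, z i = s i * ζ) :
    hessGProd k z = (-2 : ℂ) • 1 + Matrix.vecMulVec s s := by
  ext i j
  rw [hessGProd_apply]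
  by_cases hij : i = j
  · subst hij
    simp only [if_pos, Matrix.add_apply, Matrix.smul_apply, Matrix.one_apply_eq,
      Matrix.vecMulVec_apply, hs]
    norm_num
  · have hcard : ((Finset.univ.erase j).erase i).card = k - 2 := by
      rw [Finset.card_erase_of_mem (by simp [hij]), Finset.card_erase_of_mem (Finset.mem_univ j),
        Finset.card_univ, Fintype.card_fin, Nat.sub_sub]
    have hsquare : (∏ l, s l) * (∏ l, s l) = 1 := by
      rw [← Finset.prod_mul_distrib, Finset.prod_eq_one fun l _ => hs l]
    simp only [if_neg hij, Matrix.add_apply, Matrix.smul_apply, Matrix.one_apply_ne hij,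
      Matrix.vecMulVec_apply, smul_zero, zero_add]
    rw [Finset.prod_congr rfl fun l _ => hz l, Finset.prod_mul_distrib, Finset.prod_const, hcard,
      hζ, Finset.prod_erase_erase_of_mul_self_eq_one hs hij, mul_assoc, hsquare, mul_one]

theorem stmt_15 (k : ℕ) (hk : 3 ≤ k) (σ : Fin k → ℝ) (hσ : ∀ i, σ i = 1 ∨ σ i = -1)
    (ζ : ℂ) (hζ : ζ ^ (k - 2) = ∏ i, (σ i : ℂ))
    (z : Fin k → ℂ) (hz : ∀ i, z i = (σ i : ℂ) * ζ) :
    (hessGProd k z).det = (-1 : ℂ) ^ (k - 1) * 2 ^ (k - 1) * ((k : ℂ) - 2) := by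
  have hσ_sq : ∀ i, (σ i : ℂ) * σ i = 1 := fun i => by rcases hσ i with h | h <;> simp [h]
  have hdot : (fun i => (σ i : ℂ)) ⬝ᵥ (fun i => (σ i : ℂ)) = k := by
    simp [dotProduct, hσ_sq]
  rw [hessGProd_eq_neg_two_smul_one_add_vecMulVec (s := fun i => (σ i : ℂ)) hσ_sq hζ hz,
    Matrix.det_smul_one_add_vecMulVec (by norm_num), hdot, Fintype.card_fin]
  obtain ⟨n, rfl⟩ : ∃ n, k = n + 1 := ⟨k - 1, by omega⟩
  rw [Nat.add_sub_cancel, pow_succ, ← neg_one_mul (2 : ℂ), mul_pow]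
  push_cast
  field_simp
  ring
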